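/- arXiv:1710.04777 — 3 statements merged into one kernel-verified Lean document; each statement's English description precedes it below -/
import Mathlib

section
/- Let n ≥ 1, let A : ℝ^n → Sym_n(ℝ) be a map into symmetric n×n real matrices with A(y) positive semidefinite for every y, and let H : ℝ^n × ℝ^n → ℝ be any function. Fix p ∈ ℝ^n and γ, γ' ∈ ℝ. Suppose w, w' : ℝ^n → ℝ are C², ℤ^n-periodic, and satisfy −tr(A(y) D²w(y)) + H(∇w(y) + p, y) = γ and −tr(A(y) D²w'(y)) + H(∇w'(y) + p, y) = γ' for all y ∈ ℝ^n. Then γ = γ'. (Uniqueness of the effective Hamiltonian value for classical solutions of the cell problem.) -/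
/-!
Comparison at a maximum point. The difference `w - w'` is continuous and `ℤⁿ`-periodic, so it
attains a global maximum at some `y₀`. There `∇w(y₀) = ∇w'(y₀)`, so the Hamiltonian terms of the
two equations coincide, and `D²w(y₀) - D²w'(y₀)` is negative semidefinite, so that
`tr(A(y₀) D²w(y₀)) ≤ tr(A(y₀) D²w'(y₀))` because `A(y₀)` is positive semidefinite. Subtracting the
equations at `y₀` gives `γ' ≤ γ`, and exchanging the roles of `w` and `w'` gives equality.
-/

open scoped InnerProductSpace

/-- The Hessian matrix of `w : ℝⁿ → ℝ` at `y`, with entries the iterated directional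
derivatives along the standard basis vectors. -/
noncomputable def hessM {n : ℕ} (w : EuclideanSpace ℝ (Fin n) → ℝ)
    (y : EuclideanSpace ℝ (Fin n)) : Matrix (Fin n) (Fin n) ℝ :=
  fun i j =>
    fderiv ℝ (fun z => fderiv ℝ w z (EuclideanSpace.single j 1)) y (EuclideanSpace.single i 1)

/-- An integer vector `k ∈ ℤⁿ` viewed as an element of `ℝⁿ`. -/
noncomputable def intVec {n : ℕ} (k : Fin n → ℤ) : EuclideanSpace ℝ (Fin n) :=
  (WithLp.equiv 2 (Fin n → ℝ)).symm (fun i => (k i : ℝ))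

/-- A function on `ℝⁿ` is `ℤⁿ`-periodic. -/
def ZPeriodic {n : ℕ} (f : EuclideanSpace ℝ (Fin n) → ℝ) : Prop :=
  ∀ (y : EuclideanSpace ℝ (Fin n)) (k : Fin n → ℤ), f (y + intVec k) = f y

open Filter Topology Matrix

theorem IsLocalMax.deriv_deriv_nonpos {f : ℝ → ℝ} {a : ℝ} (h : IsLocalMax f a)
    (hc : ContinuousAt f a) : deriv (deriv f) a ≤ 0 := by
  by_contra! hpos
  -- by the second derivative test `a` is also a local minimum, so `f` is constant near `a`
  have hconst : f =ᶠ[𝓝 a] fun _ => f a :=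
    ((isLocalMin_of_deriv_deriv_pos hpos h.deriv_eq_zero hc).and h).mono
      fun x hx => le_antisymm hx.2 hx.1
  simp [hconst.deriv.deriv_eq] at hpos

theorem IsLocalMax.fderiv_fderiv_apply_self_nonpos {E : Type*} [NormedAddCommGroup E]
    [NormedSpace ℝ E] {v : E → ℝ} {y : E} (h : IsLocalMax v y) (hv : Differentiable ℝ v)
    (hv' : DifferentiableAt ℝ (fderiv ℝ v) y) (u : E) :
    fderiv ℝ (fderiv ℝ v) y u u ≤ 0 := by
  set line : ℝ → E := fun t => y + t • u
  have hline : ∀ t, HasDerivAt line u t := fun t => by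
    simpa [line] using ((hasDerivAt_id t).smul_const u).const_add y
  have hline0 : line 0 = y := by simp [line]
  have hderiv : deriv (v ∘ line) = fun t => fderiv ℝ v (line t) u :=
    funext fun t => ((hv _).hasFDerivAt.comp_hasDerivAt t (hline t)).deriv
  have hderiv2 : HasDerivAt (fun t => fderiv ℝ v (line t) u) (fderiv ℝ (fderiv ℝ v) y u u) 0 :=
    ((ContinuousLinearMap.apply ℝ ℝ u).hasFDerivAt.comp y hv'.hasFDerivAt).comp_hasDerivAt_of_eq
      0 (hline 0) hline0.symm
  have hmax : IsLocalMax (v ∘ line) 0 :=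
    (hline0 ▸ h).comp_continuous (hline 0).continuousAt
  simpa [hderiv, hderiv2.deriv] using
    hmax.deriv_deriv_nonpos ((hv _).continuousAt.comp (hline 0).continuousAt)

open scoped MatrixOrder in
theorem Matrix.trace_mul_nonpos_of_posSemidef {ι : Type*} [Fintype ι]
    {A M : Matrix ι ι ℝ} (hA : A.PosSemidef) (hM : ∀ x, x ⬝ᵥ M *ᵥ x ≤ 0) :
    (A * M).trace ≤ 0 := by
  classical
  obtain ⟨B, rfl⟩ := CStarAlgebra.nonneg_iff_eq_star_mul_self.mp hA.nonneg
  rw [Matrix.mul_assoc, Matrix.trace_mul_comm, Matrix.trace]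
  refine Finset.sum_nonpos fun k _ => ?_
  simpa [Matrix.mul_mul_apply, Matrix.star_eq_conjTranspose] using hM (B k)

theorem EuclideanSpace.sum_smul_single {ι : Type*} [Fintype ι] [DecidableEq ι]
    (x : EuclideanSpace ℝ ι) : ∑ i, x i • EuclideanSpace.single i (1 : ℝ) = x := by
  simpa using (EuclideanSpace.basisFun ι ℝ).toBasis.sum_repr x

theorem EuclideanSpace.dotProduct_mulVec_of_bilin {ι : Type*} [Fintype ι] [DecidableEq ι]
    (B : EuclideanSpace ℝ ι →L[ℝ] EuclideanSpace ℝ ι →L[ℝ] ℝ) (x : EuclideanSpace ℝ ι) :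
    x.ofLp ⬝ᵥ (Matrix.of fun i j => B (single i 1) (single j 1)) *ᵥ x.ofLp = B x x := by
  conv_rhs => rw [← sum_smul_single x]
  simp only [dotProduct, mulVec, of_apply, map_sum, map_smul, FunLike.coe_sum, FunLike.coe_smul,
    Finset.sum_apply, Pi.smul_apply, smul_eq_mul, Finset.mul_sum]
  rw [Finset.sum_comm]
  exact Finset.sum_congr rfl fun _ _ => Finset.sum_congr rfl fun _ _ => by ring

theorem ZPeriodic.sub {n : ℕ} {f g : EuclideanSpace ℝ (Fin n) → ℝ} (hf : ZPeriodic f)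
    (hg : ZPeriodic g) : ZPeriodic (f - g) :=
  fun y k => by simp only [Pi.sub_apply, hf y k, hg y k]

theorem ZPeriodic.exists_forall_le {n : ℕ} {f : EuclideanSpace ℝ (Fin n) → ℝ}
    (hf : ZPeriodic f) (hc : Continuous f) : ∃ y₀, ∀ y, f y ≤ f y₀ := by
  have hK : IsCompact (WithLp.toLp 2 '' Set.Icc (0 : Fin n → ℝ) 1) :=
    isCompact_Icc.image (PiLp.continuous_toLp 2 _)
  obtain ⟨y₀, -, hy₀⟩ := hK.exists_isMaxOn
    ⟨_, Set.mem_image_of_mem _ (Set.left_mem_Icc.2 zero_le_one)⟩ hc.continuousOn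
  refine ⟨y₀, fun y => ?_⟩
  have hfract : WithLp.toLp 2 (fun i => Int.fract (y i)) + intVec (fun i => ⌊y i⌋) = y := by
    ext i
    simp [intVec]
  rw [← hfract, hf]
  exact hy₀ (Set.mem_image_of_mem _
    ⟨fun i => Int.fract_nonneg _, fun i => (Int.fract_lt_one _).le⟩)

theorem ContDiff.differentiable_fderiv {𝕜 E F : Type*} [NontriviallyNormedField 𝕜]
    [NormedAddCommGroup E] [NormedSpace 𝕜 E] [NormedAddCommGroup F] [NormedSpace 𝕜 F]
    {f : E → F} {m : WithTop ℕ∞} (hf : ContDiff 𝕜 m f) (hm : 2 ≤ m) :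
    Differentiable 𝕜 (fderiv 𝕜 f) :=
  (hf.fderiv_right (m := 1) hm).differentiable one_ne_zero

section Hessian

variable {n : ℕ}

theorem hessM_eq_of_differentiableAt {w : EuclideanSpace ℝ (Fin n) → ℝ}
    {y : EuclideanSpace ℝ (Fin n)} (hw : DifferentiableAt ℝ (fderiv ℝ w) y) :
    hessM w y = Matrix.of fun i j =>
      fderiv ℝ (fderiv ℝ w) y (EuclideanSpace.single i 1) (EuclideanSpace.single j 1) := by
  ext i j
  simp [hessM, fderiv_clm_apply hw (differentiableAt_const _)]

theorem hessM_sub {w w' : EuclideanSpace ℝ (Fin n) → ℝ}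
    (hw : ContDiff ℝ 2 w) (hw' : ContDiff ℝ 2 w') (y : EuclideanSpace ℝ (Fin n)) :
    hessM (w - w') y = hessM w y - hessM w' y := by
  have hsub : fderiv ℝ (w - w') = fderiv ℝ w - fderiv ℝ w' :=
    funext fun z => fderiv_sub (hw.differentiable two_ne_zero z) (hw'.differentiable two_ne_zero z)
  have hw2 := hw.differentiable_fderiv le_rfl
  have hw'2 := hw'.differentiable_fderiv le_rfl
  rw [hessM_eq_of_differentiableAt ((hw.sub hw').differentiable_fderiv (f := w - w') le_rfl y),
    hessM_eq_of_differentiableAt (hw2 y), hessM_eq_of_differentiableAt (hw'2 y), hsub,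
    fderiv_sub (hw2 y) (hw'2 y)]
  ext i j
  simp

theorem IsLocalMax.dotProduct_hessM_mulVec_nonpos {v : EuclideanSpace ℝ (Fin n) → ℝ}
    {y : EuclideanSpace ℝ (Fin n)} (h : IsLocalMax v y) (hv : ContDiff ℝ 2 v) (x : Fin n → ℝ) :
    x ⬝ᵥ hessM v y *ᵥ x ≤ 0 := by
  rw [hessM_eq_of_differentiableAt (hv.differentiable_fderiv le_rfl y)]
  exact (EuclideanSpace.dotProduct_mulVec_of_bilin _ (WithLp.toLp 2 x)).trans_le
    (h.fderiv_fderiv_apply_self_nonpos (hv.differentiable two_ne_zero)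
      (hv.differentiable_fderiv le_rfl y) _)

end Hessian

theorem cell_value_le {n : ℕ} {A : EuclideanSpace ℝ (Fin n) → Matrix (Fin n) (Fin n) ℝ}
    (hA : ∀ y, (A y).PosSemidef) {H : EuclideanSpace ℝ (Fin n) → EuclideanSpace ℝ (Fin n) → ℝ}
    {p : EuclideanSpace ℝ (Fin n)} {γ γ' : ℝ} {w w' : EuclideanSpace ℝ (Fin n) → ℝ}
    (hw : ContDiff ℝ 2 w) (hw' : ContDiff ℝ 2 w') (hwper : ZPeriodic w) (hw'per : ZPeriodic w')
    (heq : ∀ y, -((A y) * hessM w y).trace + H (gradient w y + p) y = γ)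
    (heq' : ∀ y, -((A y) * hessM w' y).trace + H (gradient w' y + p) y = γ') :
    γ' ≤ γ := by
  obtain ⟨y₀, hmax⟩ := (hwper.sub hw'per).exists_forall_le (hw.sub hw').continuous
  have hloc : IsLocalMax (w - w') y₀ := Eventually.of_forall hmax
  have hgrad : gradient w y₀ = gradient w' y₀ := by
    have hfderiv := hloc.fderiv_eq_zero
    rw [fderiv_sub (hw.differentiable two_ne_zero y₀) (hw'.differentiable two_ne_zero y₀),
      sub_eq_zero] at hfderiv
    simp only [gradient, hfderiv]
  have htrace : (A y₀ * hessM w y₀).trace ≤ (A y₀ * hessM w' y₀).trace := by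
    rw [← sub_nonpos, ← trace_sub, ← Matrix.mul_sub, ← hessM_sub hw hw']
    exact trace_mul_nonpos_of_posSemidef (hA y₀) (hloc.dotProduct_hessM_mulVec_nonpos (hw.sub hw'))
  linarith [heq' y₀, hgrad ▸ heq y₀]

theorem effective_value_unique_general
    (n : ℕ)
    (A : EuclideanSpace ℝ (Fin n) → Matrix (Fin n) (Fin n) ℝ)
    (hApsd : ∀ y, (A y).PosSemidef)
    (H : EuclideanSpace ℝ (Fin n) → EuclideanSpace ℝ (Fin n) → ℝ)
    (p : EuclideanSpace ℝ (Fin n)) (γ γ' : ℝ)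
    (w w' : EuclideanSpace ℝ (Fin n) → ℝ)
    (hw : ContDiff ℝ 2 w) (hw' : ContDiff ℝ 2 w')
    (hwper : ZPeriodic w) (hw'per : ZPeriodic w')
    (heq : ∀ y, -((A y) * hessM w y).trace + H (gradient w y + p) y = γ)
    (heq' : ∀ y, -((A y) * hessM w' y).trace + H (gradient w' y + p) y = γ') :
    γ = γ' :=
  le_antisymm (cell_value_le hApsd hw' hw hw'per hwper heq' heq)
    (cell_value_le hApsd hw hw' hwper hw'per heq heq')

/-- Uniqueness of the effective Hamiltonian value for classical solutions
of the cell problem. -/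
theorem effective_value_unique
    (n : ℕ) (hn : 1 ≤ n)
    (A : EuclideanSpace ℝ (Fin n) → Matrix (Fin n) (Fin n) ℝ)
    (hAsymm : ∀ y, (A y).IsSymm) (hApsd : ∀ y, (A y).PosSemidef)
    (H : EuclideanSpace ℝ (Fin n) → EuclideanSpace ℝ (Fin n) → ℝ)
    (p : EuclideanSpace ℝ (Fin n)) (γ γ' : ℝ)
    (w w' : EuclideanSpace ℝ (Fin n) → ℝ)
    (hw : ContDiff ℝ 2 w) (hw' : ContDiff ℝ 2 w')
    (hwper : ZPeriodic w) (hw'per : ZPeriodic w')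
    (heq : ∀ y, -((A y) * hessM w y).trace + H (gradient w y + p) y = γ)
    (heq' : ∀ y, -((A y) * hessM w' y).trace + H (gradient w' y + p) y = γ') :
    γ = γ' :=
  effective_value_unique_general n A hApsd H p γ γ' w w' hw hw' hwper hw'per heq heq'
end

section
/- Let n ≥ 1, let A : ℝ^n → Sym_n(ℝ) with A(y) positive semidefinite for every y, and let H : ℝ^n × ℝ^n → ℝ satisfy the quadratic growth condition α|q|² − α' ≤ H(q, y) ≤ β|q|² + β' for all (q, y) ∈ ℝ^n × ℝ^n, where α, β > 0 and α', β' ≥ 0. Fix p ∈ ℝ^n and γ ∈ ℝ. If w : ℝ^n → ℝ is a C², ℤ^n-periodic function satisfying −tr(A(y) D²w(y)) + H(∇w(y) + p, y) = γ for all y ∈ ℝ^n, then α|p|² − α' ≤ γ ≤ β|p|² + β'. -/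
open scoped InnerProductSpace

/-!
At a maximum point `y₀` of the periodic function `w` (which exists because `w` is determined by
its values on the compact unit cube) the gradient vanishes and the Hessian is negative
semidefinite, so `tr (A D²w) ≤ 0` since `A` is positive semidefinite. The equation then gives
`γ ≥ H (p, y₀) ≥ α |p|² - α'`. Symmetrically, at a minimum point `γ ≤ H (p, y₁) ≤ β |p|² + β'`.
-/

open Filter Topology Matrix

theorem IsLocalMin.deriv_deriv_nonneg {f : ℝ → ℝ} {a : ℝ} (h : IsLocalMin f a)
    (hc : ContinuousAt f a) : 0 ≤ deriv (deriv f) a := by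
  by_contra! hneg
  -- the second-derivative test makes `a` also a local maximum, so `f` is locally constant
  have hconst : f =ᶠ[𝓝 a] fun _ => f a :=
    (h.and (isLocalMax_of_deriv_deriv_neg hneg h.deriv_eq_zero hc)).mono
      fun x hx => le_antisymm hx.2 hx.1
  have hzero : deriv (deriv f) a = 0 := by
    rw [hconst.deriv.deriv_eq]
    simp
  exact hneg.ne hzero

section SecondDerivativeAlongLines

variable {E : Type*} [NormedAddCommGroup E] [NormedSpace ℝ E]

theorem HasFDerivAt.hasDerivAt_comp_add_smul {F : Type*} [NormedAddCommGroup F]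
    [NormedSpace ℝ F] {f : E → F} {f' : E →L[ℝ] F} {x v : E} {t : ℝ}
    (hf : HasFDerivAt f f' (x + t • v)) : HasDerivAt (fun s : ℝ => f (x + s • v)) (f' v) t :=
  hf.comp_hasDerivAt t <|
    ((hasDerivAt_id t).smul_const v).const_add x |>.congr_deriv (one_smul ℝ v)

theorem ContDiff.deriv_deriv_comp_add_smul {w : E → ℝ} (hw : ContDiff ℝ 2 w) (x v : E) :
    deriv (deriv fun t : ℝ => w (x + t • v)) 0 = fderiv ℝ (fderiv ℝ w) x v v := by
  have hfirst : deriv (fun t : ℝ => w (x + t • v)) = fun t => fderiv ℝ w (x + t • v) v :=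
    funext fun t => ((hw.differentiable two_ne_zero _).hasFDerivAt).hasDerivAt_comp_add_smul.deriv
  have hsecond : DifferentiableAt ℝ (fderiv ℝ w) (x + (0 : ℝ) • v) :=
    (hw.fderiv_right (m := 1) le_rfl).differentiable one_ne_zero _
  rw [hfirst]
  simpa using (hsecond.hasFDerivAt.clm_apply (hasFDerivAt_const v _)).hasDerivAt_comp_add_smul.deriv

theorem IsLocalMin.fderiv_fderiv_apply_self_nonneg {w : E → ℝ} {x : E} (h : IsLocalMin w x)
    (hw : ContDiff ℝ 2 w) (v : E) : 0 ≤ fderiv ℝ (fderiv ℝ w) x v v := by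
  have h₀ : IsLocalMin w (x + (0 : ℝ) • v) := by simpa using h
  rw [← hw.deriv_deriv_comp_add_smul]
  exact (h₀.comp_continuous (g := fun t : ℝ => x + t • v) (by fun_prop)).deriv_deriv_nonneg
    (hw.continuous.comp (by fun_prop)).continuousAt

theorem IsLocalMax.fderiv_fderiv_apply_self_nonpos_s1 {w : E → ℝ} {x : E} (h : IsLocalMax w x)
    (hw : ContDiff ℝ 2 w) (v : E) : fderiv ℝ (fderiv ℝ w) x v v ≤ 0 := by
  have h₀ : IsLocalMax w (x + (0 : ℝ) • v) := by simpa using h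
  rw [← hw.deriv_deriv_comp_add_smul]
  exact (h₀.comp_continuous (g := fun t : ℝ => x + t • v) (by fun_prop)).deriv_deriv_nonpos
    (hw.continuous.comp (by fun_prop)).continuousAt

end SecondDerivativeAlongLines

theorem IsLocalExtr.gradient_eq_zero {F : Type*} [NormedAddCommGroup F] [InnerProductSpace ℝ F]
    [CompleteSpace F] {f : F → ℝ} {x : F} (h : IsLocalExtr f x) : gradient f x = 0 := by
  simp [gradient, h.fderiv_eq_zero]

open MatrixOrder in
theorem Matrix.PosSemidef.trace_mul_nonneg {ι : Type*} [Fintype ι] {A M : Matrix ι ι ℝ}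
    (hA : A.PosSemidef) (hM : ∀ u, 0 ≤ u ⬝ᵥ M *ᵥ u) : 0 ≤ (A * M).trace := by
  classical
  obtain ⟨B, rfl⟩ := CStarAlgebra.nonneg_iff_eq_star_mul_self.mp hA.nonneg
  rw [star_eq_conjTranspose, conjTranspose_eq_transpose_of_trivial, Matrix.mul_assoc,
    trace_mul_comm, trace]
  refine Finset.sum_nonneg fun i _ => ?_
  rw [diag_apply, mul_mul_apply, transpose_transpose]
  exact hM (B i)

section Hessian

variable {n : ℕ} {w : EuclideanSpace ℝ (Fin n) → ℝ} {y : EuclideanSpace ℝ (Fin n)}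

theorem hessM_eq_fderiv_fderiv (hw : DifferentiableAt ℝ (fderiv ℝ w) y) (i j : Fin n) :
    hessM w y i j =
      fderiv ℝ (fderiv ℝ w) y (EuclideanSpace.single i 1) (EuclideanSpace.single j 1) := by
  rw [hessM, fderiv_clm_apply hw (differentiableAt_const _)]
  simp

theorem dotProduct_hessM_mulVec (hw : DifferentiableAt ℝ (fderiv ℝ w) y) (u : Fin n → ℝ) :
    u ⬝ᵥ hessM w y *ᵥ u = fderiv ℝ (fderiv ℝ w) y (WithLp.toLp 2 u) (WithLp.toLp 2 u) := by
  have hu : WithLp.toLp 2 u = ∑ i, u i • EuclideanSpace.single i (1 : ℝ) := by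
    simpa using ((EuclideanSpace.basisFun (Fin n) ℝ).sum_repr (WithLp.toLp 2 u)).symm
  simp only [hu, map_sum, map_smul, FunLike.coe_sum, FunLike.coe_smul, Finset.sum_apply,
    Pi.smul_apply, smul_eq_mul, dotProduct, mulVec, hessM_eq_fderiv_fderiv hw, Finset.mul_sum]
  rw [Finset.sum_comm]
  exact Finset.sum_congr rfl fun i _ => Finset.sum_congr rfl fun j _ => by ring

theorem IsLocalMin.trace_mul_hessM_nonneg {A : Matrix (Fin n) (Fin n) ℝ} (hA : A.PosSemidef)
    (h : IsLocalMin w y) (hw : ContDiff ℝ 2 w) : 0 ≤ (A * hessM w y).trace :=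
  hA.trace_mul_nonneg fun u => by
    rw [dotProduct_hessM_mulVec ((hw.fderiv_right (m := 1) le_rfl).differentiable one_ne_zero y)]
    exact h.fderiv_fderiv_apply_self_nonneg hw _

theorem IsLocalMax.trace_mul_hessM_nonpos {A : Matrix (Fin n) (Fin n) ℝ} (hA : A.PosSemidef)
    (h : IsLocalMax w y) (hw : ContDiff ℝ 2 w) : (A * hessM w y).trace ≤ 0 := by
  have := hA.trace_mul_nonneg (M := -hessM w y) fun u => by
    rw [neg_mulVec, dotProduct_neg, neg_nonneg,
      dotProduct_hessM_mulVec ((hw.fderiv_right (m := 1) le_rfl).differentiable one_ne_zero y)]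
    exact h.fderiv_fderiv_apply_self_nonpos_s1 hw _
  rwa [Matrix.mul_neg, trace_neg, neg_nonneg] at this

end Hessian

section Periodic

variable {n : ℕ} {f : EuclideanSpace ℝ (Fin n) → ℝ}

theorem intVec_floor_add_toLp_fract (y : EuclideanSpace ℝ (Fin n)) :
    intVec (fun i => ⌊y i⌋) + WithLp.toLp 2 (fun i => Int.fract (y i)) = y := by
  ext i
  simp [intVec, Int.floor_add_fract]

theorem ZPeriodic.exists_mem_unitCube_eq (hf : ZPeriodic f) (y : EuclideanSpace ℝ (Fin n)) :
    ∃ z ∈ WithLp.toLp 2 '' Set.univ.pi fun _ => Set.Icc 0 1, f z = f y := by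
  refine ⟨_, ⟨fun i => Int.fract (y i),
    fun i _ => ⟨Int.fract_nonneg _, (Int.fract_lt_one _).le⟩, rfl⟩, ?_⟩
  rw [← hf _ (fun i => ⌊y i⌋), add_comm, intVec_floor_add_toLp_fract]

theorem ZPeriodic.exists_isMinOn (hf : ZPeriodic f) (hc : Continuous f) :
    ∃ y, IsMinOn f Set.univ y := by
  have hK : IsCompact (WithLp.toLp 2 '' Set.univ.pi fun (_ : Fin n) => Set.Icc (0 : ℝ) 1) :=
    (isCompact_univ_pi fun _ => isCompact_Icc).image (PiLp.continuous_toLp 2 _)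
  obtain ⟨y, -, hy⟩ := hK.exists_isMinOn (.image _ ⟨0, fun _ _ => by simp⟩) hc.continuousOn
  refine ⟨y, fun x _ => ?_⟩
  obtain ⟨z, hz, hzx⟩ := hf.exists_mem_unitCube_eq x
  exact (hy hz).trans_eq hzx

theorem ZPeriodic.exists_isMaxOn (hf : ZPeriodic f) (hc : Continuous f) :
    ∃ y, IsMaxOn f Set.univ y := by
  obtain ⟨y, hy⟩ := ZPeriodic.exists_isMinOn (f := fun x => -f x)
    (fun x k => congrArg Neg.neg (hf x k)) hc.neg
  exact ⟨y, fun x hx => by simpa using hy hx⟩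

end Periodic

theorem effective_value_bounds_general
    (n : ℕ)
    (A : EuclideanSpace ℝ (Fin n) → Matrix (Fin n) (Fin n) ℝ)
    (hApsd : ∀ y, (A y).PosSemidef)
    (H : EuclideanSpace ℝ (Fin n) → EuclideanSpace ℝ (Fin n) → ℝ)
    (α β α' β' : ℝ)
    (hgrowth : ∀ q y, α * ‖q‖ ^ 2 - α' ≤ H q y ∧ H q y ≤ β * ‖q‖ ^ 2 + β')
    (p : EuclideanSpace ℝ (Fin n)) (γ : ℝ)
    (w : EuclideanSpace ℝ (Fin n) → ℝ)
    (hw : ContDiff ℝ 2 w) (hwper : ZPeriodic w)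
    (heq : ∀ y, -((A y) * hessM w y).trace + H (gradient w y + p) y = γ) :
    α * ‖p‖ ^ 2 - α' ≤ γ ∧ γ ≤ β * ‖p‖ ^ 2 + β' := by
  obtain ⟨y₀, hmax⟩ := hwper.exists_isMaxOn hw.continuous
  obtain ⟨y₁, hmin⟩ := hwper.exists_isMinOn hw.continuous
  have heq₀ := heq y₀
  have heq₁ := heq y₁
  rw [(hmax.isExtr.isLocalExtr univ_mem).gradient_eq_zero, zero_add] at heq₀
  rw [(hmin.isExtr.isLocalExtr univ_mem).gradient_eq_zero, zero_add] at heq₁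
  have htr₀ := (hmax.isLocalMax univ_mem).trace_mul_hessM_nonpos (hApsd y₀) hw
  have htr₁ := (hmin.isLocalMin univ_mem).trace_mul_hessM_nonneg (hApsd y₁) hw
  constructor
  · linarith [(hgrowth p y₀).1]
  · linarith [(hgrowth p y₁).2]

/-- Bounds on the effective Hamiltonian value under quadratic growth of `H`. -/
theorem effective_value_bounds
    (n : ℕ) (hn : 1 ≤ n)
    (A : EuclideanSpace ℝ (Fin n) → Matrix (Fin n) (Fin n) ℝ)
    (hAsymm : ∀ y, (A y).IsSymm) (hApsd : ∀ y, (A y).PosSemidef)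
    (H : EuclideanSpace ℝ (Fin n) → EuclideanSpace ℝ (Fin n) → ℝ)
    (α β α' β' : ℝ) (hα : 0 < α) (hβ : 0 < β) (hα' : 0 ≤ α') (hβ' : 0 ≤ β')
    (hgrowth : ∀ q y, α * ‖q‖ ^ 2 - α' ≤ H q y ∧ H q y ≤ β * ‖q‖ ^ 2 + β')
    (p : EuclideanSpace ℝ (Fin n)) (γ : ℝ)
    (w : EuclideanSpace ℝ (Fin n) → ℝ)
    (hw : ContDiff ℝ 2 w) (hwper : ZPeriodic w)
    (heq : ∀ y, -((A y) * hessM w y).trace + H (gradient w y + p) y = γ) :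
    α * ‖p‖ ^ 2 - α' ≤ γ ∧ γ ≤ β * ‖p‖ ^ 2 + β' :=
  effective_value_bounds_general n A hApsd H α β α' β' hgrowth p γ w hw hwper heq
end

section
/- Let n ≥ 1, T > 0, let H̄ : ℝ^n → ℝ be C², let g : ℝ^n → ℝ be C¹, and let u : ℝ^n × [0, T] → ℝ be C² satisfying ∂_t u(x, t) + H̄(∇_x u(x, t)) = 0 on ℝ^n × [0, T] and u(x, 0) = g(x) for all x. Assume: (i) ∇H̄(∇g(x₀)) ≠ 0 for every x₀ ∈ ℝ^n; and (ii) for every (x, t) ∈ ℝ^n × (0, T] there exists x₀ ∈ ℝ^n with x = x₀ + t ∇H̄(∇g(x₀)) (surjectivity of the characteristics). Then the effective drift B̄(x, t) = ∇H̄(∇_x u(x, t)) satisfies B̄(x, t) ≠ 0 for every (x, t) ∈ ℝ^n × [0, T]. -/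
/-
Differentiating the equation in `x` and using the symmetry of the Hessian shows that along the
line `s ↦ (x₀ + s v, s)` the spatial derivative `p(s) = ∇ₓu` solves the ODE
`p' = D²ₓu · (v - ∇H̄(p))`. When `v = ∇H̄(∇g(x₀))` the constant `∇g(x₀)` solves the same ODE, and
since `∇H̄` is locally Lipschitz the two solutions coincide. So `∇ₓu(x₀ + t v, t) = ∇g(x₀)`, and by
surjectivity of the characteristics every `B̄(x, t)` is one of the nonzero vectors `∇H̄(∇g(x₀))`.
-/

open scoped InnerProductSpace

open Set

-- Both `γ` and the constant `γ a` solve `y' = A s (φ (γ a) - φ y)`.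
theorem eqOn_const_of_hasDerivWithinAt_clm_apply_sub
    {F G : Type*} [NormedAddCommGroup F] [NormedSpace ℝ F] [NormedAddCommGroup G]
    [NormedSpace ℝ G] {A : ℝ → G →L[ℝ] F} {φ : F → G} {γ : ℝ → F} {a b : ℝ}
    (hA : ContinuousOn A (Icc a b)) (hφ : LocallyLipschitz φ) (hγ : ContinuousOn γ (Icc a b))
    (hγ' : ∀ s ∈ Ico a b, HasDerivWithinAt γ (A s (φ (γ a) - φ (γ s))) (Ici s) s) :
    EqOn γ (fun _ => γ a) (Icc a b) := by
  set S := γ '' Icc a b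
  obtain ⟨C, hC⟩ := isCompact_Icc.bddAbove_image (continuous_nnnorm.comp_continuousOn hA)
  obtain ⟨K, hK⟩ :=
    hφ.locallyLipschitzOn.exists_lipschitzOnWith_of_compact (isCompact_Icc.image_of_continuousOn hγ)
  have hLip : ∀ s ∈ Ico a b, LipschitzOnWith (C * K) (fun y => A s (φ (γ a) - φ y)) S := by
    intro s hs
    refine LipschitzOnWith.of_dist_le_mul fun y hy z hz => ?_
    have hAs : ‖A s‖ ≤ C := hC (mem_image_of_mem _ (Ico_subset_Icc_self hs))
    calc dist (A s (φ (γ a) - φ y)) (A s (φ (γ a) - φ z)) = ‖A s (φ z - φ y)‖ := by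
          rw [dist_eq_norm, ← map_sub, sub_sub_sub_cancel_left]
      _ ≤ ‖A s‖ * ‖φ z - φ y‖ := (A s).le_opNorm _
      _ ≤ C * (K * dist y z) := by
          gcongr
          rw [← dist_eq_norm, dist_comm]
          exact hK.dist_le_mul y hy z hz
      _ = (C * K : NNReal) * dist y z := by push_cast; ring
  refine ODE_solution_unique_of_mem_Icc_right (s := fun _ => S) hLip hγ hγ'
    (fun s hs => mem_image_of_mem _ (Ico_subset_Icc_self hs)) continuousOn_const
    (fun s _ => by simpa using hasDerivWithinAt_const s (Ici s) (γ a))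
    (fun s hs => mem_image_of_mem _ (left_mem_Icc.2 (hs.1.trans hs.2.le))) rfl

section SpatialDerivative

open ContinuousLinearMap

variable {E : Type*} [NormedAddCommGroup E] [NormedSpace ℝ E] {U : E × ℝ → ℝ}

noncomputable def restrictFst : ((E × ℝ) →L[ℝ] ℝ) →L[ℝ] E →L[ℝ] ℝ :=
  (compL ℝ E (E × ℝ) ℝ).flip (inl ℝ E ℝ)

theorem restrictFst_apply (L : (E × ℝ) →L[ℝ] ℝ) (e : E) : restrictFst L e = L (e, 0) := rfl

theorem hasFDerivAt_slice {x : E} {t : ℝ} (hU : DifferentiableAt ℝ U (x, t)) :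
    HasFDerivAt (fun x' => U (x', t)) (restrictFst (fderiv ℝ U (x, t))) x :=
  hU.hasFDerivAt.comp x ((hasFDerivAt_id x).prodMk (hasFDerivAt_const t x))

theorem hasDerivAt_slice {x : E} {t : ℝ} (hU : DifferentiableAt ℝ U (x, t)) :
    HasDerivAt (fun s => U (x, s)) (fderiv ℝ U (x, t) (0, 1)) t :=
  hU.hasFDerivAt.comp_hasDerivAt t ((hasDerivAt_const t x).prodMk (hasDerivAt_id t))

theorem hasDerivAt_restrictFst_fderiv_line (hU : ContDiff ℝ 2 U) (x₀ v : E) (s : ℝ) :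
    HasDerivAt (fun s => restrictFst (fderiv ℝ U (x₀ + s • v, s)))
      (restrictFst (fderiv ℝ (fderiv ℝ U) (x₀ + s • v, s) (v, 1))) s := by
  have hline : HasDerivAt (fun s : ℝ => (x₀ + s • v, s)) (v, 1) s :=
    (((hasDerivAt_id s).smul_const v).const_add x₀).prodMk (hasDerivAt_id s) |>.congr_deriv
      (by simp)
  exact restrictFst.hasFDerivAt.comp_hasDerivAt s
    (((hU.fderiv_right le_rfl).differentiable one_ne_zero _).hasFDerivAt.comp_hasDerivAt s hline)

theorem hasFDerivAt_fderiv_slice (hU : ContDiff ℝ 2 U) (x : E) (t : ℝ) :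
    HasFDerivAt (fun x' => fderiv ℝ U (x', t))
      ((fderiv ℝ (fderiv ℝ U) (x, t)).comp (inl ℝ E ℝ)) x :=
  ((hU.fderiv_right le_rfl).differentiable one_ne_zero _).hasFDerivAt.comp x
    ((hasFDerivAt_id x).prodMk (hasFDerivAt_const t x))

theorem hasFDerivAt_restrictFst_fderiv_slice (hU : ContDiff ℝ 2 U) (x : E) (t : ℝ) :
    HasFDerivAt (fun x' => restrictFst (fderiv ℝ U (x', t)))
      (restrictFst.comp ((fderiv ℝ (fderiv ℝ U) (x, t)).comp (inl ℝ E ℝ))) x :=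
  (restrictFst (E := E)).hasFDerivAt.comp x (hasFDerivAt_fderiv_slice hU x t)

end SpatialDerivative

section Hilbert

open ContinuousLinearMap

variable {E : Type*} [NormedAddCommGroup E] [InnerProductSpace ℝ E] [CompleteSpace E]
  {U : E × ℝ → ℝ} {H : E → ℝ}

variable (E) in
noncomputable def toDualSymmL : StrongDual ℝ E →L[ℝ] E :=
  (InnerProductSpace.toDual ℝ E).symm.toContinuousLinearEquiv.toContinuousLinearMap

theorem gradient_slice {x : E} {t : ℝ} (hU : DifferentiableAt ℝ U (x, t)) :
    gradient (fun x' => U (x', t)) x = toDualSymmL E (restrictFst (fderiv ℝ U (x, t))) := by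
  rw [gradient, (hasFDerivAt_slice hU).fderiv]
  rfl

theorem fderiv_apply_toDualSymmL (H : E → ℝ) (p : E) (m : StrongDual ℝ E) :
    fderiv ℝ H p (toDualSymmL E m) = m (gradient H p) := by
  rw [← InnerProductSpace.toDual_symm_apply (x := gradient H p), real_inner_comm,
    ← InnerProductSpace.toDual_symm_apply]
  rfl

theorem ContDiff.locallyLipschitz_gradient (hH : ContDiff ℝ 2 H) : LocallyLipschitz (gradient H) :=
  (toDualSymmL E).lipschitz.locallyLipschitz.comp (hH.fderiv_right le_rfl).locallyLipschitz

theorem restrictFst_fderiv_fderiv_gradient_eq_zero (hU : ContDiff ℝ 2 U) (hH : Differentiable ℝ H)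
    {s : ℝ}
    (hs : ∀ x, fderiv ℝ U (x, s) (0, 1) + H (toDualSymmL E (restrictFst (fderiv ℝ U (x, s)))) = 0)
    (x : E) :
    restrictFst (fderiv ℝ (fderiv ℝ U) (x, s)
      (gradient H (toDualSymmL E (restrictFst (fderiv ℝ U (x, s)))), 1)) = 0 := by
  set D := fderiv ℝ (fderiv ℝ U) (x, s)
  set p := gradient H (toDualSymmL E (restrictFst (fderiv ℝ U (x, s))))
  have hDU := hasFDerivAt_fderiv_slice hU x s
  have h1 := hasFDerivAt_restrictFst_fderiv_slice hU x s
  have hpde' :=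
    ((ContinuousLinearMap.apply ℝ ℝ (((0 : E), (1 : ℝ)) : E × ℝ)).hasFDerivAt.comp x hDU).add
      ((hH _).hasFDerivAt.comp x ((toDualSymmL E).hasFDerivAt.comp x h1))
  have hderiv_zero := hpde'.unique
    ((hasFDerivAt_const (0 : ℝ) x).congr_of_eventuallyEq (.of_forall hs))
  ext e
  have he := DFunLike.congr_fun hderiv_zero e
  simp only [add_apply, ContinuousLinearMap.comp_apply, apply_apply,
    fderiv_apply_toDualSymmL, zero_apply] at he
  have hsymm : D (p, 1) (e, 0) = D (e, 0) (p, 1) :=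
    hU.contDiffAt.isSymmSndFDerivAt (by simp) _ _
  rw [restrictFst_apply, hsymm, zero_apply,
    show ((p, 1) : E × ℝ) = (0, 1) + (p, 0) by simp, map_add]
  exact he

theorem gradient_slice_along_characteristic (hH : ContDiff ℝ 2 H) (hU : ContDiff ℝ 2 U) {T : ℝ}
    (hpde : ∀ x, ∀ t ∈ Icc 0 T,
      deriv (fun s => U (x, s)) t + H (gradient (fun x' => U (x', t)) x) = 0)
    (x₀ : E) {t : ℝ} (ht : t ∈ Icc 0 T) :
    gradient (fun x' => U (x', t)) (x₀ + t • gradient H (gradient (fun x' => U (x', 0)) x₀)) =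
      gradient (fun x' => U (x', 0)) x₀ := by
  have hUd : Differentiable ℝ U := hU.differentiable two_ne_zero
  set v := gradient H (gradient (fun x' => U (x', 0)) x₀)
  set ξ : ℝ → E × ℝ := fun s => (x₀ + s • v, s)
  set γ : ℝ → StrongDual ℝ E := fun s => restrictFst (fderiv ℝ U (ξ s))
  set φ : StrongDual ℝ E → E := fun m => gradient H (toDualSymmL E m)
  have hγ_gradient : ∀ s, toDualSymmL E (γ s) = gradient (fun x' => U (x', s)) (x₀ + s • v) :=
    fun s => (gradient_slice (hUd _)).symm
  have hv : φ (γ 0) = v := by simp only [φ, hγ_gradient, zero_smul, add_zero, v]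
  set A : ℝ → E →L[ℝ] StrongDual ℝ E :=
    fun s => restrictFst.comp ((fderiv ℝ (fderiv ℝ U) (ξ s)).comp (inl ℝ E ℝ))
  have hγ' : ∀ s ∈ Icc 0 T, HasDerivAt γ (A s (φ (γ 0) - φ (γ s))) s := by
    intro s hs
    have hchar := restrictFst_fderiv_fderiv_gradient_eq_zero hU (hH.differentiable two_ne_zero)
      (fun x => by
        rw [← (hasDerivAt_slice (hUd _)).deriv, ← gradient_slice (hUd _)]
        exact hpde x s hs) (x₀ + s • v)
    convert hasDerivAt_restrictFst_fderiv_line hU x₀ v s using 1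
    rw [hv, show ((v, 1) : E × ℝ) = (v - φ (γ s), 0) + (φ (γ s), 1) by simp, map_add, map_add,
      hchar, add_zero]
    rfl
  have hA : Continuous A :=
    continuous_const.clm_comp ((((hU.fderiv_right le_rfl).continuous_fderiv one_ne_zero).comp
      (by fun_prop)).clm_comp continuous_const)
  have hγ_const := eqOn_const_of_hasDerivWithinAt_clm_apply_sub (a := 0) (b := t)
    hA.continuousOn (hH.locallyLipschitz_gradient.comp (toDualSymmL E).lipschitz.locallyLipschitz)
    (fun s _ => (hasDerivAt_restrictFst_fderiv_line hU x₀ v s).continuousAt.continuousWithinAt)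
    (fun s hs => (hγ' s ⟨hs.1, hs.2.le.trans ht.2⟩).hasDerivWithinAt) (right_mem_Icc.2 ht.1)
  calc gradient (fun x' => U (x', t)) (x₀ + t • v) = toDualSymmL E (γ t) := (hγ_gradient t).symm
    _ = toDualSymmL E (γ 0) := congrArg (toDualSymmL E) hγ_const
    _ = gradient (fun x' => U (x', 0)) x₀ := by rw [hγ_gradient, zero_smul, add_zero]

end Hilbert

theorem effective_drift_nonvanishing_general
    (n : ℕ) (T : ℝ)
    (Hbar : EuclideanSpace ℝ (Fin n) → ℝ) (hHbar : ContDiff ℝ 2 Hbar)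
    (g : EuclideanSpace ℝ (Fin n) → ℝ)
    (u : EuclideanSpace ℝ (Fin n) → ℝ → ℝ)
    (hu : ContDiff ℝ 2 (fun q : EuclideanSpace ℝ (Fin n) × ℝ => u q.1 q.2))
    (hpde : ∀ x, ∀ t ∈ Set.Icc (0:ℝ) T,
      deriv (u x) t + Hbar (gradient (fun x' => u x' t) x) = 0)
    (hinit : ∀ x, u x 0 = g x)
    (hnonvanish : ∀ x₀, gradient Hbar (gradient g x₀) ≠ 0)
    (hsurj : ∀ x : EuclideanSpace ℝ (Fin n), ∀ t ∈ Set.Ioc (0:ℝ) T,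
      ∃ x₀, x = x₀ + t • gradient Hbar (gradient g x₀)) :
    ∀ x, ∀ t ∈ Set.Icc (0:ℝ) T,
      gradient Hbar (gradient (fun x' => u x' t) x) ≠ 0 := by
  intro x t ht
  obtain ⟨x₀, rfl⟩ : ∃ x₀, x = x₀ + t • gradient Hbar (gradient g x₀) := by
    rcases ht.1.eq_or_lt with rfl | ht₀
    · exact ⟨x, by rw [zero_smul, add_zero]⟩
    · exact hsurj x t ⟨ht₀, ht.2⟩
  have hchar := gradient_slice_along_characteristic (U := fun q => u q.1 q.2) hHbar hu hpde x₀ ht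
  rw [show (fun x' => u x' 0) = g from funext hinit] at hchar
  rw [hchar]
  exact hnonvanish x₀

/-- If the characteristic directions never vanish and the characteristics sweep out
all of space, then the effective drift `B̄(x,t) = ∇H̄(∇ₓu(x,t))` never vanishes. -/
theorem effective_drift_nonvanishing
    (n : ℕ) (hn : 1 ≤ n) (T : ℝ) (hT : 0 < T)
    (Hbar : EuclideanSpace ℝ (Fin n) → ℝ) (hHbar : ContDiff ℝ 2 Hbar)
    (g : EuclideanSpace ℝ (Fin n) → ℝ) (hg : ContDiff ℝ 1 g)
    (u : EuclideanSpace ℝ (Fin n) → ℝ → ℝ)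
    (hu : ContDiff ℝ 2 (fun q : EuclideanSpace ℝ (Fin n) × ℝ => u q.1 q.2))
    (hpde : ∀ x, ∀ t ∈ Set.Icc (0:ℝ) T,
      deriv (u x) t + Hbar (gradient (fun x' => u x' t) x) = 0)
    (hinit : ∀ x, u x 0 = g x)
    (hnonvanish : ∀ x₀, gradient Hbar (gradient g x₀) ≠ 0)
    (hsurj : ∀ x : EuclideanSpace ℝ (Fin n), ∀ t ∈ Set.Ioc (0:ℝ) T,
      ∃ x₀, x = x₀ + t • gradient Hbar (gradient g x₀)) :
    ∀ x, ∀ t ∈ Set.Icc (0:ℝ) T,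
      gradient Hbar (gradient (fun x' => u x' t) x) ≠ 0 :=
  effective_drift_nonvanishing_general n T Hbar hHbar g u hu hpde hinit hnonvanish hsurj
end
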